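/- arXiv:math/0311053 — 3 statements merged into one kernel-verified Lean document; each statement's English description precedes it below -/
import Mathlib

section
/- For any cyclic word w and any cyclically reduced word v with (v) = w, the forward T-orbit {T^n v^∞ : n ≥ 0} of v^∞ equals A(w) and is a finite set of cardinality ||w_0||, where w_0 is the root of w (i.e., w = w_0^s with s maximal). -/
open Finset
noncomputable section
attribute [local instance] Classical.propDecidable

abbrev Letter (k : ℕ) := Fin k × Bool

def linv {k : ℕ} (x : Letter k) : Letter k := (x.1, !x.2)

/-- `w` is a freely reduced word: no letter is followed by its inverse. -/
def Reduced {k : ℕ} (w : List (Letter k)) : Prop :=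
  ∀ i < w.length, w[i + 1]? ≠ (w[i]?).map linv

/-- `w` is cyclically reduced. -/
def CyclRed {k : ℕ} (w : List (Letter k)) : Prop := Reduced (w ++ w)

/-- `w` and `w'` define the same cyclic word. -/
def CyclEq {k : ℕ} (w w' : List (Letter k)) : Prop := ∃ n, w' = w.rotate n

/-- the word `u` occurs in the cyclic word of `w` starting at position `i` (with wrap-around). -/
def occursAt {k : ℕ} (w u : List (Letter k)) (i : ℕ) : Prop :=
  ∀ j < u.length, w[(i + j) % w.length]? = u[j]?

/-- the number `n_w(u)` of cyclic occurrences of `u` in the cyclic word `w`. -/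
def cyclCount {k : ℕ} (w u : List (Letter k)) : ℕ :=
  ((Finset.range w.length).filter (occursAt w u)).card

/-- the frequency `f_w(u) = n_w(u)/‖w‖`. -/
def freq {k : ℕ} (w u : List (Letter k)) : ℚ := (cyclCount w u : ℚ) / (w.length : ℚ)

/-- the boundary `∂F`: semi-infinite freely reduced words. -/
def Boundary (k : ℕ) := {f : ℕ → Letter k // ∀ n, f (n + 1) ≠ linv (f n)}

instance (k : ℕ) : TopologicalSpace (Boundary k) :=
  inferInstanceAs (TopologicalSpace {f : ℕ → Letter k // ∀ n, f (n + 1) ≠ linv (f n)})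

instance (k : ℕ) : MeasurableSpace (Boundary k) := borel _
instance (k : ℕ) : BorelSpace (Boundary k) := ⟨rfl⟩

/-- the shift map `T`, erasing the first letter. -/
def shiftT {k : ℕ} (ξ : Boundary k) : Boundary k := ⟨fun n => ξ.1 (n + 1), fun n => ξ.2 (n + 1)⟩

/-- the cylinder set of semi-infinite reduced words with prefix `v`. -/
def Cyl {k : ℕ} (v : List (Letter k)) : Set (Boundary k) := {ξ | ∀ i < v.length, v[i]? = some (ξ.1 i)}

/-- `A(w) = {v^∞ : (v) = w}`. -/
def Aset {k : ℕ} (w : List (Letter k)) : Set (Boundary k) :=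
  {ξ | ∃ v, CyclEq w v ∧ ∀ n, v[n % v.length]? = some (ξ.1 n)}


/-!
Writing `v = w.rotate r`, the point `ξ = v^∞` satisfies `ξ n = w[(n + r) mod ‖w‖]`, so
`T^n ξ = (w.rotate (r + n))^∞`; as `n` varies this runs through every rotation of `w`, which
gives the orbit `A(w)`. The orbit of a periodic point has as many elements as its minimal
period, and `T^d ξ = ξ` exactly when `d` is a period of the cyclic word `w`. The minimal such
period divides `‖w₀‖`, and it cannot be smaller than `‖w₀‖`, since otherwise `w` would be a
higher power than `w₀^s`.
-/

namespace List

variable {α : Type*}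

theorem getElem?_mod_rotate (l : List α) (n i : ℕ) :
    (l.rotate n)[i % l.length]? = l[(i + n) % l.length]? := by
  by_cases hl : l = []
  · simp [hl]
  have hL : 0 < l.length := length_pos_iff.mpr hl
  rw [getElem?_eq_getElem (by rw [length_rotate]; exact Nat.mod_lt _ hL),
    getElem?_eq_getElem (Nat.mod_lt _ hL), getElem_rotate]
  simp only [Nat.mod_add_mod]

theorem getElem?_flatten_replicate (z : List α) {s i : ℕ} (hi : i < s * z.length) :
    (replicate s z).flatten[i]? = z[i % z.length]? := by
  induction s generalizing i with
  | zero => simp at hi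
  | succ t ih =>
    rw [replicate_succ, flatten_cons]
    by_cases h : i < z.length
    · rw [getElem?_append_left h, Nat.mod_eq_of_lt h]
    · push Not at h
      rw [getElem?_append_right h, ih (by rw [Nat.succ_mul] at hi; omega),
        ← Nat.mod_eq_sub_mod h]

def IsCyclicPeriod (w : List α) (d : ℕ) : Prop :=
  ∀ m, w[(m + d) % w.length]? = w[m % w.length]?

theorem IsCyclicPeriod.mul {w : List α} {d : ℕ} (h : w.IsCyclicPeriod d) (c : ℕ) :
    w.IsCyclicPeriod (c * d) := by
  induction c with
  | zero => simp [IsCyclicPeriod]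
  | succ c ih => intro m; rw [Nat.succ_mul, ← Nat.add_assoc, h, ih]

theorem isCyclicPeriod_length_of_eq_flatten_replicate {w z : List α} {s : ℕ}
    (hw : w = (replicate s z).flatten) : w.IsCyclicPeriod z.length := by
  have hL : w.length = s * z.length := by simp [hw]
  intro m
  rcases Nat.eq_zero_or_pos w.length with h0 | hpos
  · simp [h0]
  have key : ∀ i, w[i % w.length]? = z[i % z.length]? := fun i => by
    rw [← Nat.mod_mod_of_dvd i (Dvd.intro_left s hL.symm)]
    subst hw
    exact getElem?_flatten_replicate z (hL ▸ Nat.mod_lt i hpos)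
  rw [key, key, Nat.add_mod_right]

theorem IsCyclicPeriod.eq_flatten_replicate_take {w : List α} {d : ℕ}
    (h : w.IsCyclicPeriod d) (hd : d ∣ w.length) :
    w = (replicate (w.length / d) (w.take d)).flatten := by
  rcases Nat.eq_zero_or_pos w.length with h0 | hpos
  · simp [length_eq_zero_iff.mp h0]
  have hd0 : 0 < d := Nat.pos_of_dvd_of_pos hd hpos
  have htake : (w.take d).length = d := length_take_of_le (Nat.le_of_dvd hpos hd)
  apply ext_getElem?
  intro i
  by_cases hi : i < w.length
  · rw [getElem?_flatten_replicate _ (by rwa [htake, Nat.div_mul_cancel hd]), htake,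
      getElem?_take_of_lt (Nat.mod_lt i hd0)]
    have := h.mul (i / d) (i % d)
    rwa [Nat.mod_add_div', Nat.mod_eq_of_lt hi,
      Nat.mod_eq_of_lt (lt_of_le_of_lt (Nat.mod_le i d) hi)] at this
  · push Not at hi
    rw [getElem?_eq_none hi, getElem?_eq_none]
    simpa [htake, Nat.div_mul_cancel hd] using hi

end List

theorem Nat.exists_add_mod_eq {L : ℕ} (hL : 0 < L) (a b : ℕ) : ∃ n, (n + a) % L = b % L :=
  ⟨b + a * (L - 1), by rw [Nat.add_assoc, ← Nat.mul_add_one, Nat.sub_add_cancel hL,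
    Nat.add_mul_mod_self_right]⟩

namespace Function

variable {α : Type*} {f : α → α} {x : α}

theorem ncard_setOf_iterate_eq_minimalPeriod (hx : x ∈ periodicPts f) :
    {y | ∃ n, y = f^[n] x}.ncard = minimalPeriod f x := by
  have horbit : {y | ∃ n, y = f^[n] x} = (f^[·] x) '' Set.Iio (minimalPeriod f x) := by
    ext y
    constructor
    · rintro ⟨n, rfl⟩
      exact ⟨n % minimalPeriod f x, Nat.mod_lt _ (minimalPeriod_pos_of_mem_periodicPts hx),
        iterate_mod_minimalPeriod_eq⟩
    · rintro ⟨n, -, rfl⟩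
      exact ⟨n, rfl⟩
  rw [horbit, iterate_injOn_Iio_minimalPeriod.ncard_image, ← Finset.coe_range,
    Set.ncard_coe_finset, Finset.card_range]

end Function

open Function

section Boundary

variable {k : ℕ}

theorem shiftT_iterate_apply (ξ : Boundary k) (n m : ℕ) :
    (shiftT^[n] ξ).1 m = ξ.1 (m + n) := by
  induction n generalizing ξ with
  | zero => rfl
  | succ n ih => rw [iterate_succ_apply, ih]; rfl

/-- `η = (w.rotate a)^∞`. -/
def ReadsCyclically (w : List (Letter k)) (a : ℕ) (η : Boundary k) : Prop :=
  ∀ n, w[(n + a) % w.length]? = some (η.1 n)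

theorem readsCyclically_iff_rotate {w : List (Letter k)} {a : ℕ} {η : Boundary k} :
    ReadsCyclically w a η ↔
      ∀ n, (w.rotate a)[n % (w.rotate a).length]? = some (η.1 n) := by
  simp only [ReadsCyclically, List.length_rotate, List.getElem?_mod_rotate]

theorem mem_Aset_iff {w : List (Letter k)} {η : Boundary k} :
    η ∈ Aset w ↔ ∃ a, ReadsCyclically w a η := by
  simp only [Aset, CyclEq, readsCyclically_iff_rotate, Set.mem_ofPred_eq]
  constructor
  · rintro ⟨v, ⟨a, rfl⟩, hv⟩
    exact ⟨a, hv⟩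
  · rintro ⟨a, ha⟩
    exact ⟨_, ⟨a, rfl⟩, ha⟩

namespace ReadsCyclically

variable {w : List (Letter k)} {a : ℕ} {η : Boundary k}

theorem length_pos (h : ReadsCyclically w a η) : 0 < w.length :=
  Nat.pos_of_ne_zero fun h0 => by simpa [List.length_eq_zero_iff.mp h0] using h 0

theorem shiftT_iterate (h : ReadsCyclically w a η) (n : ℕ) :
    ReadsCyclically w (a + n) (shiftT^[n] η) := by
  intro m
  rw [shiftT_iterate_apply, ← h, Nat.add_comm a n, Nat.add_assoc]

theorem eq_of_mod_eq {b : ℕ} {η' : Boundary k} (h : ReadsCyclically w a η)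
    (h' : ReadsCyclically w b η') (hab : a % w.length = b % w.length) : η = η' := by
  apply Subtype.ext
  funext n
  apply Option.some_injective
  rw [← h n, ← h' n, Nat.add_mod, hab, ← Nat.add_mod]

theorem isPeriodicPt_shiftT_iff (h : ReadsCyclically w a η) {d : ℕ} :
    IsPeriodicPt shiftT d η ↔ w.IsCyclicPeriod d := by
  constructor
  · intro hd m
    obtain ⟨n, hn⟩ := Nat.exists_add_mod_eq h.length_pos a m
    have hshift := h.shiftT_iterate d n
    rwa [hd.eq, ← h n, hn, ← Nat.add_assoc, Nat.add_mod, hn, ← Nat.add_mod] at hshift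
  · intro hd
    refine (ReadsCyclically.eq_of_mod_eq (fun n => ?_) h rfl : shiftT^[d] η = η)
    rw [← hd, Nat.add_assoc]
    exact h.shiftT_iterate d n

theorem mem_periodicPts_shiftT (h : ReadsCyclically w a η) : η ∈ periodicPts shiftT :=
  ⟨w.length, h.length_pos, h.isPeriodicPt_shiftT_iff.2 fun m => by rw [Nat.add_mod_right]⟩

theorem setOf_iterate_shiftT_eq_Aset (h : ReadsCyclically w a η) :
    {ζ | ∃ n, ζ = shiftT^[n] η} = Aset w := by
  ext ζ
  rw [mem_Aset_iff]
  constructor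
  · rintro ⟨n, rfl⟩
    exact ⟨a + n, h.shiftT_iterate n⟩
  · rintro ⟨b, hb⟩
    obtain ⟨n, hn⟩ := Nat.exists_add_mod_eq h.length_pos a b
    exact ⟨n, hb.eq_of_mod_eq (h.shiftT_iterate n) (by rw [Nat.add_comm a n, hn])⟩

theorem minimalPeriod_shiftT_eq (h : ReadsCyclically w a η) {w₀ : List (Letter k)} {s : ℕ}
    (hs : w = (List.replicate s w₀).flatten)
    (hmax : ∀ z t, w = (List.replicate t z).flatten → t ≤ s) :
    minimalPeriod shiftT η = w₀.length := by
  set q := minimalPeriod shiftT η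
  have hL : w.length = s * w₀.length := by simp [hs]
  have hq0 : 0 < q := minimalPeriod_pos_of_mem_periodicPts h.mem_periodicPts_shiftT
  have hs0 : 0 < s := Nat.pos_of_mul_pos_right (hL ▸ h.length_pos)
  obtain ⟨c, hc⟩ : q ∣ w₀.length := IsPeriodicPt.minimalPeriod_dvd
    (h.isPeriodicPt_shiftT_iff.2 (List.isCyclicPeriod_length_of_eq_flatten_replicate hs))
  have hq : w.IsCyclicPeriod q := h.isPeriodicPt_shiftT_iff.1 (isPeriodicPt_minimalPeriod _ _)
  have hqL : w.length = q * (s * c) := by rw [hL, hc]; ring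
  have hsc := hmax _ _ (hq.eq_flatten_replicate_take ⟨_, hqL⟩)
  rw [hqL, Nat.mul_div_cancel_left _ hq0] at hsc
  have hc1 : c = 1 := by
    have : 0 < c := Nat.pos_of_mul_pos_left (hc ▸ Nat.pos_of_mul_pos_left (hL ▸ h.length_pos))
    nlinarith
  rw [hc, hc1, Nat.mul_one]

end ReadsCyclically

end Boundary

theorem stmt10_general (k : ℕ) (w v : List (Letter k))
    (hv : CyclEq w v) (ξ : Boundary k) (hξ : ∀ n, v[n % v.length]? = some (ξ.1 n))
    (w₀ : List (Letter k)) (s : ℕ) (hs : w = (List.replicate s w₀).flatten)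
    (hmax : ∀ (z : List (Letter k)) (t : ℕ), w = (List.replicate t z).flatten → t ≤ s) :
    {η | ∃ n : ℕ, η = shiftT^[n] ξ} = Aset w ∧ (Aset w).ncard = w₀.length := by
  obtain ⟨r, rfl⟩ := hv
  have hread : ReadsCyclically w r ξ := readsCyclically_iff_rotate.2 hξ
  rw [← hread.setOf_iterate_shiftT_eq_Aset, ncard_setOf_iterate_eq_minimalPeriod
    hread.mem_periodicPts_shiftT, hread.minimalPeriod_shiftT_eq hs hmax]
  exact ⟨rfl, rfl⟩

theorem stmt10 (k : ℕ) (hk : 2 ≤ k) (w v : List (Letter k)) (hw : CyclRed w) (hwne : w ≠ [])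
    (hv : CyclEq w v) (ξ : Boundary k) (hξ : ∀ n, v[n % v.length]? = some (ξ.1 n))
    (w₀ : List (Letter k)) (s : ℕ) (hs : w = (List.replicate s w₀).flatten)
    (hmax : ∀ (z : List (Letter k)) (t : ℕ), w = (List.replicate t z).flatten → t ≤ s) :
    {η | ∃ n : ℕ, η = shiftT^[n] ξ} = Aset w ∧ (Aset w).ncard = w₀.length :=
  stmt10_general k w v hv ξ hξ w₀ s hs hmax

end
end

section
/- A rational point q ∈ Q_1 is realized as the letter-frequency tuple (f_w(x))_{x∈X} of some nontrivial cyclic word w if and only if there is no letter x ∈ X with q_x > 0, q_{x^{−1}} > 0 and q_x + q_{x^{−1}} = 1. -/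
open Finset
noncomputable section
attribute [local instance] Classical.propDecidable

/-- the finite set of freely reduced words of length `m`. -/
def WordsM (k m : ℕ) : Finset (List (Letter k)) :=
  ((Finset.univ : Finset (Fin m → Letter k)).image fun f => List.ofFn f).filter
    (fun w => Reduced w)

/-- the polyhedron `Q_m`, realized as functions supported on reduced words of length `m`. -/
def Qset (k m : ℕ) : Set (List (Letter k) → ℝ) :=
  {q | (∀ v, ¬(Reduced v ∧ v.length = m) → q v = 0) ∧
       (∀ v, 0 ≤ q v) ∧
       (∑ v ∈ WordsM k m, q v = 1) ∧
       ∀ u : List (Letter k), Reduced u → u.length = m - 1 →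
         (∑ x ∈ Finset.univ.filter (fun x : Letter k => Reduced (u ++ [x])), q (u ++ [x])) =
         (∑ x ∈ Finset.univ.filter (fun x : Letter k => Reduced (x :: u)), q (x :: u)) }

/-! A reduced word all of whose letters are `x` or `x⁻¹` is a power of one of them, since `x` and
`x⁻¹` are never adjacent; this gives necessity. Conversely, write `q = n / N` with natural
numbers. Unless the support of `n` is an inverse pair, it can be listed with no letter followed
by its inverse (add letters one at a time, at the front or at the back), so
`u = x₁^{n₁} ⋯ x_r^{n_r}` is reduced, and the palindrome `u · reverse u` is cyclically reduced
with letter frequencies `2 n_x / 2 N`. -/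

namespace List

variable {α : Type*} {R : α → α → Prop}

theorem IsChain.flatMap_replicate [Std.Refl R] {l : List α} (h : l.IsChain R) {n : α → ℕ}
    (hn : ∀ a ∈ l, n a ≠ 0) : (l.flatMap fun a => replicate (n a) a).IsChain R := by
  induction h with
  | nil => simp
  | singleton a => simpa using isChain_replicate_of_rel (n a) (refl a)
  | @cons_cons a b l hab h ih =>
    rw [flatMap_cons, isChain_append]
    refine ⟨isChain_replicate_of_rel _ (refl a), ih fun c hc => hn c (mem_cons_of_mem _ hc), ?_⟩
    intro x hx y hy
    rw [getLast?_replicate] at hx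
    rw [flatMap_cons, head?_append, head?_replicate] at hy
    have ha := hn a mem_cons_self
    have hb := hn b (mem_cons_of_mem _ mem_cons_self)
    simp_all

theorem IsChain.append_reverse [Std.Refl R] [Std.Symm R] {l : List α} (h : l.IsChain R) :
    (l ++ l.reverse).IsChain R := by
  refine isChain_append.2 ⟨h, isChain_reverse.2 (h.imp fun _ _ => symm), ?_⟩
  intro x hx y hy
  rw [head?_reverse, hx] at hy
  cases hy
  exact refl x

theorem IsChain.not_mem_and_mem_of_subset_pair [Std.Refl R] [Std.Symm R] {l : List α}
    (h : l.IsChain R) {x y : α} (hxy : ¬R x y) (hl : ∀ a ∈ l, a = x ∨ a = y) :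
    ¬(x ∈ l ∧ y ∈ l) := by
  have heq : l.IsChain (· = ·) := by
    refine h.imp_of_mem_imp fun a b ha hb hab => ?_
    rcases hl a ha with rfl | rfl <;> rcases hl b hb with rfl | rfl
    · rfl
    · exact absurd hab hxy
    · exact absurd (symm hab) hxy
    · rfl
  rintro ⟨hx, hy⟩
  obtain ⟨a, l, rfl⟩ := exists_cons_of_ne_nil (ne_nil_of_mem hx)
  rw [isChain_cons_eq_iff_eq_replicate] at heq
  rw [heq, ← replicate_succ] at hx hy
  exact hxy (by rw [eq_of_mem_replicate hx, eq_of_mem_replicate hy]; exact refl a)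

theorem card_filter_getElem?_eq_count [BEq α] [LawfulBEq α] (w : List α) (x : α) :
    ((Finset.range w.length).filter fun i => w[i]? = some x).card = w.count x := by
  induction w with
  | nil => simp
  | cons a w ih =>
    rw [card_filter, length_cons, Finset.sum_range_succ', ← card_filter]
    simp only [getElem?_cons_succ, ih, count_cons]
    by_cases h : a = x <;> simp [h]

theorem count_flatMap_replicate [BEq α] [LawfulBEq α] (l : List α) (n : α → ℕ) (x : α) :
    (l.flatMap fun a => replicate (n a) a).count x = l.count x * n x := by
  induction l with
  | nil => simp
  | cons a l ih =>
    rw [flatMap_cons, count_append, count_replicate, ih, count_cons]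
    by_cases h : a = x <;> simp [h, add_mul, add_comm]

theorem length_eq_sum_count [Fintype α] [BEq α] [LawfulBEq α] (w : List α) :
    w.length = ∑ x, w.count x := by
  induction w with
  | nil => simp
  | cons a w ih => simp [count_cons, sum_add_distrib, ← ih]

end List

namespace Finset

open List

theorem exists_nodup_isChain_toFinset_eq {α : Type*} [DecidableEq α] {R : α → α → Prop}
    [Std.Refl R] [Std.Symm R] (hR : ∀ a b c, ¬R a b → ¬R a c → b = c) (S : Finset α)
    (hS : ∀ x y, ¬R x y → S ≠ {x, y}) :
    ∃ L : List α, L.Nodup ∧ L.toFinset = S ∧ L.IsChain R := by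
  induction S using Finset.induction_on with
  | empty => exact ⟨[], by simp⟩
  | insert a T ha ih =>
    by_cases hT : ∃ x y, ¬R x y ∧ T = {x, y}
    · obtain ⟨x, y, hxy, rfl⟩ := hT
      have hxa : R x a := by
        by_contra h
        exact ha (by simp [hR x a y h hxy])
      have hay : R a y := by
        by_contra h
        exact ha (by simp [hR y a x (fun h' => h (symm h')) (fun h' => hxy (symm h'))])
      refine ⟨[x, a, y], ?_, by ext; simp; tauto, by simp [hxa, hay]⟩
      have hxy' : x ≠ y := by rintro rfl; exact hxy (refl x)
      simp_all [eq_comm]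
    simp only [not_exists, not_and] at hT
    obtain ⟨L, hnd, rfl, hch⟩ := ih fun x y hxy => hT x y hxy
    rcases eq_or_ne L [] with rfl | hne
    · exact ⟨[a], by simp⟩
    have haL : a ∉ L := by simpa using ha
    by_cases hhead : R a (L.head hne)
    · refine ⟨a :: L, hnd.cons haL, by simp, ?_⟩
      obtain ⟨b, L, rfl⟩ := exists_cons_of_ne_nil hne
      exact hch.cons_cons hhead
    by_cases hlast : R (L.getLast hne) a
    · refine ⟨L ++ [a], hnd.append (nodup_singleton a) (by simpa using haL), by simp, ?_⟩
      exact hch.append (isChain_singleton a) (by simp [getLast?_eq_some_getLast hne, hlast])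
    obtain ⟨b, rfl⟩ := (hnd.head_eq_getLast_iff hne).1
      (hR a _ _ hhead fun h => hlast (symm h))
    exact absurd (by simp) (hS a b (by simpa using hhead))

end Finset

theorem exists_eq_nat_div_sum {ι : Type*} [Fintype ι] (p : ι → ℝ) (hp : ∀ i, 0 ≤ p i)
    (hsum : ∑ i, p i = 1) (hrat : ∀ i, ∃ r : ℚ, p i = r) :
    ∃ n : ι → ℕ, 0 < ∑ i, n i ∧ ∀ i, p i = n i / ∑ j, n j := by
  choose r hr using hrat
  set N := ∏ i, (r i).den
  have hN : (0 : ℝ) < N := by positivity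
  have hmul_nat : ∀ i, ∃ n : ℕ, (n : ℝ) = p i * N := by
    intro i
    obtain ⟨t, ht⟩ := dvd_prod_of_mem (fun i => (r i).den) (mem_univ i)
    have hnum : 0 ≤ (r i).num := Rat.num_nonneg.2 (by exact_mod_cast hr i ▸ hp i)
    have hcast : ((r i).num.toNat : ℝ) = r i * (r i).den := by
      rw [Rat.cast_def, div_mul_cancel₀ _ (by positivity)]
      exact_mod_cast Int.toNat_of_nonneg hnum
    refine ⟨(r i).num.toNat * t, ?_⟩
    simp only [N, ht, hr i]
    push_cast
    rw [hcast]
    ring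
  choose n hn using hmul_nat
  have hsum_n : ((∑ i, n i : ℕ) : ℝ) = N := by
    push_cast
    simp_rw [hn, ← sum_mul, hsum, one_mul]
  refine ⟨n, by exact_mod_cast hsum_n ▸ hN, fun i => ?_⟩
  rw [hsum_n, hn, mul_div_cancel_right₀ _ hN.ne']

theorem linv_ne_self {k : ℕ} (x : Letter k) : linv x ≠ x := by
  simp [linv, Prod.ext_iff]

theorem linv_linv {k : ℕ} (x : Letter k) : linv (linv x) = x := by
  simp [linv]

def NoCancel {k : ℕ} (a b : Letter k) : Prop := b ≠ linv a

instance {k : ℕ} : Std.Refl (@NoCancel k) := ⟨fun a => linv_ne_self a |>.symm⟩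

instance {k : ℕ} : Std.Symm (@NoCancel k) :=
  ⟨fun a b hab hba => hab (by rw [hba, linv_linv])⟩

theorem reduced_iff_isChain {k : ℕ} (w : List (Letter k)) :
    Reduced w ↔ w.IsChain NoCancel := by
  rw [Reduced, List.isChain_iff_getElem]
  constructor
  · intro h i hi
    have hi' : i < w.length := by omega
    simpa [NoCancel, List.getElem?_eq_getElem hi, List.getElem?_eq_getElem hi'] using h i hi'
  · intro h i hi
    by_cases hi' : i + 1 < w.length
    · simpa [NoCancel, List.getElem?_eq_getElem hi', List.getElem?_eq_getElem hi] using h i hi'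
    · simp [List.getElem?_eq_none (by omega : w.length ≤ i + 1), List.getElem?_eq_getElem hi]

theorem cyclCount_singleton {k : ℕ} (w : List (Letter k)) (x : Letter k) :
    cyclCount w [x] = w.count x := by
  rw [cyclCount, ← List.card_filter_getElem?_eq_count]
  congr 1
  ext i
  simp only [mem_filter, mem_range, and_congr_right_iff]
  intro hi
  simp [occursAt, Nat.mod_eq_of_lt hi]

theorem wordsM_one (k : ℕ) : WordsM k 1 = univ.image fun x : Letter k => [x] := by
  ext w
  simp only [WordsM, mem_filter, mem_image, mem_univ, true_and]
  constructor
  · rintro ⟨⟨f, rfl⟩, -⟩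
    exact ⟨f 0, by simp [List.ofFn_succ]⟩
  · rintro ⟨x, rfl⟩
    exact ⟨⟨fun _ => x, by simp [List.ofFn_succ]⟩,
      (reduced_iff_isChain _).2 (List.isChain_singleton x)⟩

def ConcentratedOnInversePair {k : ℕ} (m : Letter k → ℕ) : Prop :=
  ∃ x, 0 < m x ∧ 0 < m (linv x) ∧ m x + m (linv x) = ∑ y, m y

theorem exists_inversePair_add_eq_one_iff {k : ℕ} (q : List (Letter k) → ℝ)
    (m : Letter k → ℕ) (hm : 0 < ∑ x, m x) (hq : ∀ x, q [x] = m x / ∑ y, m y) :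
    (∃ x, 0 < q [x] ∧ 0 < q [linv x] ∧ q [x] + q [linv x] = 1) ↔
      ConcentratedOnInversePair m := by
  have hm' : (0 : ℝ) < ∑ y, m y := by exact_mod_cast hm
  simp only [ConcentratedOnInversePair, hq, div_pos_iff_of_pos_right hm', Nat.cast_pos,
    ← add_div, div_eq_one_iff_eq hm'.ne']
  exact_mod_cast Iff.rfl

theorem CyclRed.not_concentratedOnInversePair {k : ℕ} {w : List (Letter k)} (hw : CyclRed w) :
    ¬ConcentratedOnInversePair (w.count ·) := by
  rintro ⟨x, hx, hx', hsum⟩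
  beta_reduce at hx hx' hsum
  have hred : w.IsChain NoCancel := ((reduced_iff_isChain _).1 hw).left_of_append
  refine hred.not_mem_and_mem_of_subset_pair (y := linv x) (by simp [NoCancel]) (fun a ha => ?_)
    ⟨List.count_pos_iff.1 hx, List.count_pos_iff.1 hx'⟩
  by_contra! hne
  have : ∑ y ∈ {a, x, linv x}, w.count y ≤ ∑ y, w.count y :=
    sum_le_sum_of_subset (subset_univ _)
  rw [sum_insert (by simp [hne.1, hne.2]), sum_pair (linv_ne_self x).symm, ← hsum] at this
  have := List.count_pos_iff.2 ha
  omega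

theorem exists_cyclRed_count_eq_two_mul {k : ℕ} (m : Letter k → ℕ)
    (hm : ¬ConcentratedOnInversePair m) :
    ∃ w : List (Letter k), CyclRed w ∧ ∀ x, w.count x = 2 * m x := by
  have hsupp : ∀ x y, ¬NoCancel x y → univ.filter (m · ≠ 0) ≠ {x, y} := by
    rintro x y hxy hS
    obtain rfl : y = linv x := not_not.1 hxy
    have hmem : ∀ z, m z ≠ 0 ↔ z = x ∨ z = linv x := by simpa [Finset.ext_iff] using hS
    refine hm ⟨x, Nat.pos_of_ne_zero ((hmem x).2 (.inl rfl)),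
      Nat.pos_of_ne_zero ((hmem _).2 (.inr rfl)), ?_⟩
    rw [← sum_filter_ne_zero, hS, sum_pair (linv_ne_self x).symm]
  obtain ⟨L, hnd, hL, hch⟩ := Finset.exists_nodup_isChain_toFinset_eq (R := @NoCancel k)
    (fun a b c hb hc => (not_not.1 hb).trans (not_not.1 hc).symm) _ hsupp
  have hmemL : ∀ x, x ∈ L ↔ m x ≠ 0 := by simpa [Finset.ext_iff] using hL
  set u := L.flatMap fun a => List.replicate (m a) a
  have hu : u.IsChain NoCancel := hch.flatMap_replicate fun a ha => (hmemL a).1 ha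
  refine ⟨u ++ u.reverse, ?_, fun x => ?_⟩
  · have := hu.append_reverse.append_reverse
    rwa [List.reverse_append, List.reverse_reverse, ← reduced_iff_isChain] at this
  · rw [List.count_append, List.count_reverse, List.count_flatMap_replicate]
    by_cases hx : m x = 0
    · simp [hx]
    · rw [List.count_eq_one_of_mem hnd ((hmemL x).2 hx)]
      ring

theorem stmt13_general (k : ℕ) (q : List (Letter k) → ℝ) (hq : q ∈ Qset k 1)
    (hrat : ∀ v, ∃ r : ℚ, q v = (r : ℝ)) :
    (∃ w : List (Letter k), CyclRed w ∧ w ≠ [] ∧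
        ∀ x : Letter k, q [x] = ((freq w [x] : ℚ) : ℝ)) ↔
      ¬ ∃ x : Letter k, 0 < q [x] ∧ 0 < q [linv x] ∧ q [x] + q [linv x] = 1 := by
  obtain ⟨-, hq_nonneg, hq_sum, -⟩ := hq
  rw [wordsM_one, sum_image fun _ _ _ _ h => List.singleton_injective h] at hq_sum
  constructor
  · rintro ⟨w, hw, hw_ne, hfreq⟩
    have hlen := List.length_eq_sum_count w
    rw [exists_inversePair_add_eq_one_iff q (w.count ·) (hlen ▸ List.length_pos_iff.2 hw_ne)
      fun x => by rw [hfreq, freq, cyclCount_singleton, ← hlen]; push_cast; rfl]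
    exact hw.not_concentratedOnInversePair
  · intro hq_pair
    obtain ⟨m, hm_pos, hqm⟩ := exists_eq_nat_div_sum (fun x => q [x]) (fun x => hq_nonneg _)
      hq_sum fun x => hrat _
    rw [exists_inversePair_add_eq_one_iff q m hm_pos hqm] at hq_pair
    obtain ⟨w, hw, hcount⟩ := exists_cyclRed_count_eq_two_mul m hq_pair
    have hlen : w.length = 2 * ∑ x, m x := by
      simp only [List.length_eq_sum_count w, hcount, mul_sum]
    refine ⟨w, hw, List.ne_nil_of_length_pos (by omega), fun x => ?_⟩
    rw [hqm, freq, cyclCount_singleton, hcount, hlen]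
    push_cast
    rw [mul_div_mul_left _ _ two_ne_zero]

theorem stmt13 (k : ℕ) (hk : 2 ≤ k) (q : List (Letter k) → ℝ) (hq : q ∈ Qset k 1)
    (hrat : ∀ v, ∃ r : ℚ, q v = (r : ℝ)) :
    (∃ w : List (Letter k), CyclRed w ∧ w ≠ [] ∧
        ∀ x : Letter k, q [x] = ((freq w [x] : ℚ) : ℝ)) ↔
      ¬ ∃ x : Letter k, 0 < q [x] ∧ 0 < q [linv x] ∧ q [x] + q [linv x] = 1 :=
  stmt13_general k q hq hrat

end
end

section
/- For m ≥ 2, every extremal point p of the compact convex polyhedron Q_m has connected improved initial graph Γ'_p, and hence p is realized as the frequency tuple of some cyclic word. -/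
open Finset
noncomputable section
attribute [local instance] Classical.propDecidable

/-- the undirected adjacency relation of the improved initial graph `Γ'_q`. -/
def eadj (k m : ℕ) (q : List (Letter k) → ℝ) (u u' : List (Letter k)) : Prop :=
  ∃ v, Reduced v ∧ v.length = m ∧ 0 < q v ∧
    ((v.take (m - 1) = u ∧ v.drop 1 = u') ∨ (v.take (m - 1) = u' ∧ v.drop 1 = u))

/-- `u` is a vertex of the improved initial graph `Γ'_q`. -/
def isVert (k m : ℕ) (q : List (Letter k) → ℝ) (u : List (Letter k)) : Prop :=
  ∃ v, Reduced v ∧ v.length = m ∧ 0 < q v ∧ (v.take (m - 1) = u ∨ v.drop 1 = u)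

/-- the underlying undirected graph of `Γ'_q` is connected. -/
def GraphConn (k m : ℕ) (q : List (Letter k) → ℝ) : Prop :=
  ∀ u u', isVert k m q u → isVert k m q u' → Relation.ReflTransGen (eadj k m q) u u'

/-
An extreme point `p` of `Q_m` is determined by its support. Since `p` satisfies Kirchhoff's law,
every positive edge `v` of `Γ'_p` is followed by a positive edge starting at the end vertex of `v`;
iterating this successor map on the finitely many positive edges yields a closed walk.
The normalised edge counts of a closed walk form a point of `Q_m` supported inside the support
of `p`, so `p` is a proper convex combination of it and another point of `Q_m` unless the two
coincide. Hence `p` is the frequency tuple of the closed walk: its support is the edge set of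
that walk, so `Γ'_p` is connected, and reading off the first letters along the walk gives a
cyclically reduced word `w` with `p = f_w`.
-/

open Function

lemma Function.Periodic.card_filter_range_succ {P : ℕ → Prop} [DecidablePred P] {L : ℕ}
    (hP : Periodic P L) : #{t ∈ range L | P (t + 1)} = #{t ∈ range L | P t} := by
  have h := Nat.count_succ' P L
  simp only [Nat.count_succ, hP.eq, Nat.count_eq_card_filter_range] at h
  omega

lemma List.sum_ite_eq_append_singleton {α : Type*} [Fintype α] [DecidableEq α] {v : List α}
    (hv : v ≠ []) (u : List α) :
    (∑ x, if v = u ++ [x] then 1 else 0 : ℕ) = if v.dropLast = u then 1 else 0 := by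
  obtain ⟨l, a, rfl⟩ := (List.eq_nil_or_concat v).resolve_left hv
  by_cases h : l = u <;> simp [h]

lemma List.sum_ite_eq_cons {α : Type*} [Fintype α] [DecidableEq α] {v : List α} (hv : v ≠ [])
    (u : List α) :
    (∑ x, if v = x :: u then 1 else 0 : ℕ) = if v.tail = u then 1 else 0 := by
  obtain ⟨a, l, rfl⟩ := List.exists_cons_of_ne_nil hv
  by_cases h : l = u <;> simp [h]

lemma mem_WordsM {k m : ℕ} {v : List (Letter k)} :
    v ∈ WordsM k m ↔ Reduced v ∧ v.length = m := by
  simp only [WordsM, mem_filter, mem_image, mem_univ, true_and]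
  constructor
  · rintro ⟨⟨f, rfl⟩, hr⟩
    exact ⟨hr, List.length_ofFn⟩
  · rintro ⟨hr, rfl⟩
    exact ⟨⟨fun i => v[i], List.ofFn_getElem⟩, hr⟩

lemma Reduced.tail {k : ℕ} {v : List (Letter k)} (h : Reduced v) : Reduced v.tail := by
  intro i hi
  simpa using h (i + 1) (by simp at hi; omega)

namespace Qset

variable {k m : ℕ} {p q : List (Letter k) → ℝ}

lemma mem_WordsM_of_ne_zero (hq : q ∈ Qset k m) {v : List (Letter k)} (hv : q v ≠ 0) :
    v ∈ WordsM k m :=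
  mem_WordsM.2 (by_contra fun h => hv (hq.1 v h))

lemma le_one (hq : q ∈ Qset k m) (v : List (Letter k)) : q v ≤ 1 := by
  by_cases hv : v ∈ WordsM k m
  · rw [← hq.2.2.1]
    exact single_le_sum (fun w _ => hq.2.1 w) hv
  · rw [hq.1 v (mt mem_WordsM.2 hv)]
    exact zero_le_one

/-- Kirchhoff's law at the vertex `v.tail`. -/
lemma exists_pos_dropLast_eq_tail (hq : q ∈ Qset k m) (hm : 0 < m) {v : List (Letter k)}
    (hv : 0 < q v) : ∃ v', 0 < q v' ∧ v'.dropLast = v.tail := by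
  obtain ⟨hvred, hvlen⟩ := mem_WordsM.1 (mem_WordsM_of_ne_zero hq hv.ne')
  obtain ⟨a, u, rfl⟩ := List.exists_cons_of_ne_nil (List.ne_nil_of_length_pos (hvlen ▸ hm))
  have hin : 0 < ∑ x ∈ univ.filter (fun x : Letter k => Reduced (x :: u)), q (x :: u) :=
    hv.trans_le (single_le_sum (f := fun x => q (x :: u)) (fun x _ => hq.2.1 _)
      (mem_filter.2 ⟨mem_univ a, hvred⟩))
  rw [← hq.2.2.2 u hvred.tail (by simp at hvlen; omega),
    sum_pos_iff_of_nonneg (fun x _ => hq.2.1 _)] at hin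
  obtain ⟨x, -, hx⟩ := hin
  exact ⟨u ++ [x], hx, List.dropLast_concat⟩

lemma sub_mul_div_one_sub_mem (hp : p ∈ Qset k m) (hq : q ∈ Qset k m) {ε : ℝ} (hε : ε < 1)
    (hle : ∀ v, ε * q v ≤ p v) : (fun v => (p v - ε * q v) / (1 - ε)) ∈ Qset k m := by
  obtain ⟨hp0, -, hp1, hpK⟩ := hp
  obtain ⟨hq0, -, hq1, hqK⟩ := hq
  have hε' : (1 - ε) ≠ 0 := by linarith
  refine ⟨fun v hv => by simp [hp0 v hv, hq0 v hv], fun v => div_nonneg (by linarith [hle v])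
    (by linarith), ?_, fun u hu hlen => ?_⟩
  · rw [← sum_div, sum_sub_distrib, ← mul_sum, hp1, hq1, mul_one, div_self hε']
  · simp only [← sum_div, sum_sub_distrib, ← mul_sum, hpK u hu hlen, hqK u hu hlen]

lemma eq_of_mem_extremePoints (hp : p ∈ Set.extremePoints ℝ (Qset k m)) (hq : q ∈ Qset k m)
    (hsupp : ∀ v, 0 < q v → 0 < p v) : q = p := by
  obtain ⟨ε, hε0, hε1, hεp⟩ : ∃ ε : ℝ, 0 < ε ∧ ε < 1 ∧
      ∀ v ∈ (WordsM k m).filter (fun v => 0 < q v), ε < p v := by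
    have hsmall : ∀ᶠ ε in nhds (0 : ℝ), ε < 1 ∧
        ∀ v ∈ (WordsM k m).filter (fun v => 0 < q v), ε < p v :=
      (eventually_lt_nhds one_pos).and <| (Filter.eventually_all_finset _).2 fun v hv =>
        eventually_lt_nhds (hsupp v (mem_filter.1 hv).2)
    exact ((show ∀ᶠ ε in nhdsWithin (0 : ℝ) (Set.Ioi 0), 0 < ε from self_mem_nhdsWithin).and
      (nhdsWithin_le_nhds hsmall)).exists
  have hle : ∀ v, ε * q v ≤ p v := by
    intro v
    rcases (hq.2.1 v).eq_or_lt with hv | hv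
    · rw [← hv, mul_zero]
      exact hp.1.2.1 v
    · calc ε * q v ≤ ε * 1 := by gcongr; exact le_one hq v
        _ ≤ p v := by
          rw [mul_one]
          exact (hεp v (mem_filter.2 ⟨mem_WordsM_of_ne_zero hq hv.ne', hv⟩)).le
  refine hp.2 hq (sub_mul_div_one_sub_mem hp.1 hq hε1 hle)
    ⟨ε, 1 - ε, hε0, by linarith, by ring, ?_⟩
  have hε' : 1 - ε ≠ 0 := by linarith
  funext v
  simp only [Pi.add_apply, Pi.smul_apply, smul_eq_mul]
  field_simp
  ring

end Qset

section CyclicWalk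

variable {k m L : ℕ} {e : ℕ → List (Letter k)}

/-- `e` is a closed walk of length `L` in the de Bruijn-type graph whose edges are the reduced
words `v` of length `m`, running from `v.dropLast` to `v.tail`. -/
structure IsCyclicWalk (m L : ℕ) (e : ℕ → List (Letter k)) : Prop where
  pos : 0 < L
  mem : ∀ t, e t ∈ WordsM k m
  dropLast_succ : ∀ t, (e (t + 1)).dropLast = (e t).tail
  periodic : Periodic e L

lemma Qset.exists_isCyclicWalk {p : List (Letter k) → ℝ} (hp : p ∈ Qset k m) (hm : 0 < m) :
    ∃ L e, IsCyclicWalk m L e ∧ ∀ t, 0 < p (e t) := by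
  let S := {v // 0 < p v}
  have : Finite S := Set.Finite.to_subtype <| (WordsM k m).finite_toSet.subset
    fun v hv => Qset.mem_WordsM_of_ne_zero hp (ne_of_gt hv)
  obtain ⟨v₀, -, hv₀⟩ := exists_ne_zero_of_sum_ne_zero (hp.2.2.1.symm ▸ one_ne_zero)
  have hsucc (v : S) : ∃ v' : S, v'.1.dropLast = v.1.tail :=
    let ⟨v', hpos, hv'⟩ := Qset.exists_pos_dropLast_eq_tail hp hm v.2
    ⟨⟨v', hpos⟩, hv'⟩
  choose f hf using hsucc
  let x₀ : S := ⟨v₀, (hp.2.1 v₀).lt_of_ne' hv₀⟩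
  obtain ⟨i, j, hij, hfij⟩ : ∃ i j, i < j ∧ f^[i] x₀ = f^[j] x₀ := by
    obtain ⟨i, j, hne, h⟩ := Finite.exists_ne_map_eq_of_infinite fun n => f^[n] x₀
    rcases hne.lt_or_gt with hlt | hlt
    exacts [⟨i, j, hlt, h⟩, ⟨j, i, hlt, h.symm⟩]
  refine ⟨j - i, fun t => (f^[t] (f^[i] x₀)).1,
    ⟨by omega, fun t => Qset.mem_WordsM_of_ne_zero hp (ne_of_gt (f^[t] _).2), fun t => ?_,
      fun t => ?_⟩, fun t => (f^[t] _).2⟩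
  · simp only [iterate_succ_apply']
    exact hf _
  · rw [iterate_add_apply, ← iterate_add_apply f (j - i) i, Nat.sub_add_cancel hij.le, ← hfij]

def walkCount (e : ℕ → List (Letter k)) (L : ℕ) (v : List (Letter k)) : ℕ :=
  #{t ∈ range L | e t = v}

def walkFreq (e : ℕ → List (Letter k)) (L : ℕ) (v : List (Letter k)) : ℝ :=
  walkCount e L v / L

lemma sum_walkCount_append_singleton (hne : ∀ t, e t ≠ []) (u : List (Letter k)) :
    ∑ x, walkCount e L (u ++ [x]) = #{t ∈ range L | (e t).dropLast = u} := by
  simp only [walkCount, card_filter]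
  rw [sum_comm]
  exact sum_congr rfl fun t _ => List.sum_ite_eq_append_singleton (hne t) u

lemma sum_walkCount_cons (hne : ∀ t, e t ≠ []) (u : List (Letter k)) :
    ∑ x, walkCount e L (x :: u) = #{t ∈ range L | (e t).tail = u} := by
  simp only [walkCount, card_filter]
  rw [sum_comm]
  exact sum_congr rfl fun t _ => List.sum_ite_eq_cons (hne t) u

lemma exists_eq_of_walkFreq_ne_zero {v : List (Letter k)} (hv : walkFreq e L v ≠ 0) :
    ∃ t, e t = v := by
  have hv' : walkCount e L v ≠ 0 := fun h => hv (by simp [walkFreq, h])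
  obtain ⟨t, ht⟩ := card_ne_zero.1 hv'
  exact ⟨t, (mem_filter.1 ht).2⟩

namespace IsCyclicWalk

variable (he : IsCyclicWalk m L e)
include he

lemma ne_nil (hm : 0 < m) (t : ℕ) : e t ≠ [] :=
  List.ne_nil_of_length_pos ((mem_WordsM.1 (he.mem t)).2 ▸ hm)

lemma sum_walkCount_append_singleton_eq_cons (hm : 0 < m) (u : List (Letter k)) :
    ∑ x, walkCount e L (u ++ [x]) = ∑ x, walkCount e L (x :: u) := by
  have hper : Periodic (fun t => (e t).dropLast = u) L := fun t => by simp only [he.periodic t]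
  rw [sum_walkCount_append_singleton (he.ne_nil hm), sum_walkCount_cons (he.ne_nil hm)]
  simpa only [he.dropLast_succ] using hper.card_filter_range_succ.symm

lemma walkCount_pos (t : ℕ) : 0 < walkCount e L (e t) :=
  card_pos.2 ⟨t % L,
    mem_filter.2 ⟨mem_range.2 (Nat.mod_lt t he.pos), he.periodic.map_mod_nat t⟩⟩

lemma walkFreq_mem_Qset (hm : 0 < m) : walkFreq e L ∈ Qset k m := by
  have hL : (L : ℝ) ≠ 0 := Nat.cast_ne_zero.2 he.pos.ne'
  have hred {v : List (Letter k)} (hv : walkFreq e L v ≠ 0) : Reduced v ∧ v.length = m := by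
    obtain ⟨t, rfl⟩ := exists_eq_of_walkFreq_ne_zero hv
    exact mem_WordsM.1 (he.mem t)
  refine ⟨fun v hv => by_contra fun h => hv (hred h), fun v => by unfold walkFreq; positivity,
    ?_, fun u _ _ => ?_⟩
  · simp only [walkFreq, ← sum_div, ← Nat.cast_sum, walkCount]
    rw [← card_eq_sum_card_fiberwise fun t _ => he.mem t, card_range, div_self hL]
  · rw [sum_filter_of_ne fun x _ hx => (hred hx).1, sum_filter_of_ne fun x _ hx => (hred hx).1]
    simp only [walkFreq, ← sum_div]
    congr 1
    exact_mod_cast he.sum_walkCount_append_singleton_eq_cons hm u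

lemma take_succ_eq_drop (t : ℕ) : (e (t + 1)).take (m - 1) = (e t).drop 1 := by
  rw [List.drop_one, ← he.dropLast_succ, List.dropLast_eq_take, (mem_WordsM.1 (he.mem _)).2]

lemma graphConn_walkFreq : GraphConn k m (walkFreq e L) := by
  have hedge (t : ℕ) : eadj k m (walkFreq e L) ((e t).take (m - 1)) ((e (t + 1)).take (m - 1)) :=
    ⟨e t, (mem_WordsM.1 (he.mem t)).1, (mem_WordsM.1 (he.mem t)).2,
      div_pos (Nat.cast_pos.2 (he.walkCount_pos t)) (Nat.cast_pos.2 he.pos),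
      Or.inl ⟨rfl, (he.take_succ_eq_drop t).symm⟩⟩
  have hpath (t : ℕ) :
      Relation.ReflTransGen (eadj k m (walkFreq e L)) ((e 0).take (m - 1))
        ((e t).take (m - 1)) := by
    induction t with
    | zero => rfl
    | succ t ih => exact ih.tail (hedge t)
  have hvert {u : List (Letter k)} (hu : isVert k m (walkFreq e L) u) :
      ∃ t, (e t).take (m - 1) = u := by
    obtain ⟨v, -, -, hv, hu⟩ := hu
    obtain ⟨t, rfl⟩ := exists_eq_of_walkFreq_ne_zero hv.ne'
    rcases hu with hu | hu
    exacts [⟨t, hu⟩, ⟨t + 1, (he.take_succ_eq_drop t).trans hu⟩]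
  have : Std.Symm (eadj k m (walkFreq e L)) :=
    ⟨fun _ _ ⟨v, hred, hlen, hpos, hv⟩ => ⟨v, hred, hlen, hpos, hv.symm⟩⟩
  intro u u' hu hu'
  obtain ⟨a, rfl⟩ := hvert hu
  obtain ⟨b, rfl⟩ := hvert hu'
  exact (Std.Symm.symm _ _ (hpath a)).trans (hpath b)

lemma exists_cyclRed_cyclCount_eq (hm : 2 ≤ m) :
    ∃ w : List (Letter k), CyclRed w ∧ w.length = L ∧
      ∀ v, v.length = m → cyclCount w v = walkCount e L v := by
  have hlen (t : ℕ) : (e t).length = m := (mem_WordsM.1 (he.mem t)).2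
  obtain ⟨ℓ, hℓ⟩ : ∃ ℓ : ℕ → Letter k, ∀ t, (e t)[0]? = some (ℓ t) := by
    choose ℓ tail hℓ using fun t => List.exists_cons_of_ne_nil (he.ne_nil (by omega) t)
    exact ⟨ℓ, fun t => by simp [hℓ t]⟩
  have hper : Periodic ℓ L := fun t =>
    Option.some_injective _ (by rw [← hℓ, ← hℓ, he.periodic])
  -- consecutive edges overlap in `m - 1` letters, so `e t = [ℓ t, …, ℓ (t + m - 1)]`
  have hletter (s : ℕ) (hs : s < m) (t : ℕ) : (e t)[s]? = some (ℓ (t + s)) := by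
    induction s generalizing t with
    | zero => exact hℓ t
    | succ s ih =>
      rw [← List.getElem?_tail, ← he.dropLast_succ, List.getElem?_dropLast,
        if_pos (by rw [hlen]; omega), ih (by omega), Nat.add_right_comm, Nat.add_assoc]
  set w := List.ofFn fun i : Fin L => ℓ i
  have hwlen : w.length = L := List.length_ofFn
  have hw (n : ℕ) : w[n % L]? = some (ℓ n) := by
    simp [w, Nat.mod_lt _ he.pos, hper.map_mod_nat]
  have hww (n : ℕ) (hn : n < 2 * L) : (w ++ w)[n]? = some (ℓ n) := by
    rw [List.getElem?_append, hwlen]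
    split_ifs with h
    · simpa [Nat.mod_eq_of_lt h] using hw n
    · have := hw (n - L)
      rwa [Nat.mod_eq_of_lt (by omega), ← hper (n - L), Nat.sub_add_cancel (by omega)] at this
  refine ⟨w, fun a ha => ?_, hwlen, fun v hv => ?_⟩
  · rw [List.length_append, hwlen, ← two_mul] at ha
    rw [hww a ha]
    by_cases ha' : a + 1 < 2 * L
    · have hred := (mem_WordsM.1 (he.mem a)).1 0 (by rw [hlen]; omega)
      rwa [hletter 1 (by omega), hletter 0 (by omega), add_zero, ← hww (a + 1) ha'] at hred
    · rw [List.getElem?_eq_none (by simp; omega)]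
      simp
  · have hocc (t : ℕ) : occursAt w v t ↔ e t = v := by
      simp only [occursAt, hwlen, hv, hw]
      constructor
      · intro h
        refine List.ext_getElem? fun j => ?_
        by_cases hj : j < m
        · rw [hletter j hj, h j hj]
        · rw [List.getElem?_eq_none (by rw [hlen]; omega), List.getElem?_eq_none (by omega)]
      · rintro rfl j hj
        exact (hletter j hj t).symm
    simp only [cyclCount, walkCount, hwlen, hocc]

end IsCyclicWalk

end CyclicWalk

theorem stmt15_general (k m : ℕ) (hm : 2 ≤ m) (p : List (Letter k) → ℝ)
    (hp : p ∈ Set.extremePoints ℝ (Qset k m)) :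
    GraphConn k m p ∧
      ∃ w : List (Letter k), CyclRed w ∧ w ≠ [] ∧
        ∀ v, Reduced v → v.length = m → p v = ((freq w v : ℚ) : ℝ) := by
  obtain ⟨L, e, he, hpos⟩ := Qset.exists_isCyclicWalk hp.1 (by omega)
  have hpe : walkFreq e L = p :=
    Qset.eq_of_mem_extremePoints hp (he.walkFreq_mem_Qset (by omega)) fun v hv => by
      obtain ⟨t, rfl⟩ := exists_eq_of_walkFreq_ne_zero hv.ne'
      exact hpos t
  obtain ⟨w, hw, hwlen, hcount⟩ := he.exists_cyclRed_cyclCount_eq hm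
  refine ⟨hpe ▸ he.graphConn_walkFreq, w, hw, List.ne_nil_of_length_pos (hwlen ▸ he.pos),
    fun v _ hv => ?_⟩
  rw [← hpe, walkFreq, freq, hcount v hv, hwlen, Rat.cast_div, Rat.cast_natCast, Rat.cast_natCast]

theorem stmt15 (k m : ℕ) (hk : 2 ≤ k) (hm : 2 ≤ m) (p : List (Letter k) → ℝ)
    (hp : p ∈ Set.extremePoints ℝ (Qset k m)) :
    GraphConn k m p ∧
      ∃ w : List (Letter k), CyclRed w ∧ w ≠ [] ∧
        ∀ v, Reduced v → v.length = m → p v = ((freq w v : ℚ) : ℝ) :=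
  stmt15_general k m hm p hp

end
end
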